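/- arXiv:1201.2040 — 2 statements merged into one kernel-verified Lean document; each statement's English description precedes it below -/
import Mathlib

section
/- Let g be a finite-dimensional Lie algebra over a field K, let A be a unital associative K-algebra, and let X ↦ L⁰_X be a Lie algebra homomorphism of g into the Lie algebra Der(A) of all derivations of A. Then there exists a unique operation of g in the universal differential calculus Ω(A) such that L_X(a) = L⁰_X(a) for every a ∈ A. -/
open scoped TensorProduct DirectSum

/-- A differential making an ℕ-graded algebra into a graded differential algebra:
`d` is homogeneous of degree `+1`, squares to zero, and is an antiderivation
(graded Leibniz rule). -/
structure IsGDA (K : Type) [Field K] (Ω : Type) [Ring Ω] [Algebra K Ω]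
    (𝒜 : ℕ → Submodule K Ω) (d : Ω →ₗ[K] Ω) : Prop where
  d_mem : ∀ (n : ℕ), ∀ a ∈ 𝒜 n, d a ∈ 𝒜 (n + 1)
  d_sq : ∀ a : Ω, d (d a) = 0
  leibniz : ∀ (n : ℕ) (a b : Ω), a ∈ 𝒜 n →
    d (a * b) = d a * b + ((-1 : K) ^ n) • (a * d b)

/-- An operation (in the sense of H. Cartan) of a Lie algebra `g` in a graded
differential algebra `Ω`: a linear family of degree `-1` antiderivations `i X`
satisfying the Cartan relation `[i X, L Y] = i ⁅X,Y⁆`, where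
`L Y = i Y ∘ d + d ∘ i Y`. -/
structure IsLieOperation (K : Type) [Field K] (g : Type) [LieRing g] [LieAlgebra K g]
    (Ω : Type) [Ring Ω] [Algebra K Ω] (𝒜 : ℕ → Submodule K Ω) (d : Ω →ₗ[K] Ω)
    (i : g →ₗ[K] Module.End K Ω) : Prop where
  i_mem : ∀ (X : g) (n : ℕ), ∀ a ∈ 𝒜 (n + 1), i X a ∈ 𝒜 n
  i_deg0 : ∀ (X : g), ∀ a ∈ 𝒜 0, i X a = 0
  antider : ∀ (X : g) (n : ℕ) (a b : Ω), a ∈ 𝒜 n →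
    i X (a * b) = i X a * b + ((-1 : K) ^ n) • (a * i X b)
  cartan : ∀ X Y : g,
    i X * ((d : Module.End K Ω) * i Y + i Y * (d : Module.End K Ω))
      - ((d : Module.End K Ω) * i Y + i Y * (d : Module.End K Ω)) * i X = i ⁅X, Y⁆

/-- The graded differential envelope `Ω_gr(A)` of an ℕ-graded algebra `A`
(for `A` trivially graded in degree `0` this is the universal differential
calculus, i.e. the differential envelope `Ω(A)`), encoded by its universal
property: a graded differential algebra together with a degree preserving
algebra homomorphism `ι : A → W` such that every degree preserving algebra
homomorphism from `A` to a graded differential algebra extends uniquely to a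
homomorphism of graded differential algebras on `W`. -/
structure GDEnvelope (K : Type) [Field K] (A : Type) [Ring A] [Algebra K A]
    (𝒜 : ℕ → Submodule K A) where
  W : Type
  ringW : Ring W
  algW : Algebra K W
  grading : ℕ → Submodule K W
  gradedW : GradedAlgebra grading
  d : W →ₗ[K] W
  isGDA : IsGDA K W grading d
  ι : A →ₐ[K] W
  ι_grading : ∀ (n : ℕ), ∀ a ∈ 𝒜 n, ι a ∈ grading n
  univ : ∀ (Ω : Type) (_ : Ring Ω) (_ : Algebra K Ω) (ℬ : ℕ → Submodule K Ω)
    (_ : GradedAlgebra ℬ) (d' : Ω →ₗ[K] Ω), IsGDA K Ω ℬ d' →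
    ∀ (α : A →ₐ[K] Ω), (∀ (n : ℕ), ∀ a ∈ 𝒜 n, α a ∈ ℬ n) →
    ∃! Φ : W →ₐ[K] Ω, (∀ (n : ℕ), ∀ w ∈ grading n, Φ w ∈ ℬ n) ∧
      (∀ w, Φ (d w) = d' (Φ w)) ∧ (∀ a, Φ (ι a) = α a)

attribute [instance] GDEnvelope.ringW GDEnvelope.algW GDEnvelope.gradedW

/-- The trivial grading on an algebra `A`, concentrating everything in
degree `0`; the differential envelope `Ω(A)` of an ungraded algebra `A` is the
graded differential envelope of `A` with this grading. -/
def trivGrading (K : Type) [Field K] (A : Type) [Ring A] [Algebra K A] :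
    ℕ → Submodule K A := fun n => if n = 0 then ⊤ else ⊥

/-!
Fix a derivation `D` of `A` and write `Ω = Ω(A)`, `ε` for its grade involution and
`L_j = d j + j d`. Call a degree `-1` antiderivation of `Ω` vanishing in degree `0` a
contraction. The graded differential algebra `T = Ω ⊕ Ω[-1] ⊕ Ω`, with product
`(a, b, c) (a', b', c') = (a a', b a' + ε(a) b', c a' + a c')` and differential
`(a, b, c) ↦ (d a, c - d b, d c)`, is built so that the morphisms of graded differential
algebras `Ω → T` lifting the identity are exactly the maps `w ↦ (w, j w, L_j w)` with `j` a
contraction. By the universal property of `Ω(A)` such a morphism is determined by its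
restriction `a ↦ (a, 0, L_j a)` to `A`, and `a ↦ (a, 0, D a)` does extend; its second
component is a contraction `j` with `L_j = D` on `A`. So every derivation of `A` is `L_j` on `A`
for exactly one contraction `j`. Linearity of `X ↦ i_X` and the Cartan relation
`[i_X, L_Y] = i_[X,Y]` follow from this uniqueness, since `[i_X, L_Y]` is again a contraction
and its Lie derivative is `[L_X, L_Y]`.
-/

open DirectSum

lemma apply_one_eq_zero_of_leibniz {R : Type*} [Ring R] {f : R → R}
    (hf : ∀ x y, f (x * y) = f x * y + x * f y) : f 1 = 0 := by
  simpa using hf 1 1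

section Regrade

variable {R M N ι κ : Type} [Semiring R] [AddCommMonoid M] [Module R M] [AddCommMonoid N]
  [Module R N] [DecidableEq ι] [DecidableEq κ] {ℳ : ι → Submodule R M}
  {𝒩 : κ → Submodule R N}

noncomputable def DirectSum.regrade (σ : ι → κ) (φ : M →ₗ[R] N)
    (hφ : ∀ i, ∀ x ∈ ℳ i, φ x ∈ 𝒩 (σ i)) : (⨁ i, ℳ i) →ₗ[R] ⨁ k, 𝒩 k :=
  toModule R ι _ fun i => lof R κ (fun k => 𝒩 k) (σ i) ∘ₗ φ.restrict (hφ i)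

variable {σ : ι → κ} {φ : M →ₗ[R] N} (hφ : ∀ i, ∀ x ∈ ℳ i, φ x ∈ 𝒩 (σ i))

lemma DirectSum.regrade_of {i : ι} (x : ℳ i) :
    regrade σ φ hφ (of _ i x) = of _ (σ i) ⟨φ x, hφ i x x.2⟩ := by
  rw [← lof_eq_of R, regrade, toModule_lof]
  rfl

lemma DirectSum.coeLinearMap_regrade (x : ⨁ i, ℳ i) :
    coeLinearMap 𝒩 (regrade σ φ hφ x) = φ (coeLinearMap ℳ x) := by
  induction x using DirectSum.induction_on with
  | zero => simp
  | of i x => simp [regrade_of]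
  | add x y hx hy => simp only [map_add, hx, hy]

end Regrade

section GradeInvolution

variable {K W : Type} [Field K] [Ring W] [Algebra K W] (𝒜 : ℕ → Submodule K W)
  [GradedAlgebra 𝒜]

noncomputable def gradeSign : W →ₗ[K] W :=
  (toModule K ℕ W fun n => (-1 : K) ^ n • (𝒜 n).subtype) ∘ₗ
    (decomposeLinearEquiv 𝒜).toLinearMap

variable {𝒜} in
lemma gradeSign_of_mem {n : ℕ} {a : W} (h : a ∈ 𝒜 n) :
    gradeSign 𝒜 a = (-1 : K) ^ n • a := by
  simp [gradeSign, decomposeLinearEquiv_apply, decompose_of_mem 𝒜 h, ← lof_eq_of K]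

noncomputable def gradeInvolution : W →ₐ[K] W :=
  AlgHom.ofLinearMap (gradeSign 𝒜)
    (by rw [gradeSign_of_mem SetLike.GradedOne.one_mem, pow_zero, one_smul])
    (fun x y => by
      induction x using DirectSum.Decomposition.inductionOn 𝒜 with
      | zero => simp
      | add x₁ x₂ h₁ h₂ => simp only [add_mul, map_add, h₁, h₂]
      | @homogeneous m a =>
        induction y using DirectSum.Decomposition.inductionOn 𝒜 with
        | zero => simp
        | add y₁ y₂ h₁ h₂ => simp only [mul_add, map_add, h₁, h₂]
        | @homogeneous n b =>
          rw [gradeSign_of_mem a.2, gradeSign_of_mem b.2,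
            gradeSign_of_mem (SetLike.mul_mem_graded a.2 b.2), pow_add, smul_mul_smul_comm])

variable {𝒜}

lemma gradeInvolution_of_mem {n : ℕ} {a : W} (h : a ∈ 𝒜 n) :
    gradeInvolution 𝒜 a = (-1 : K) ^ n • a :=
  gradeSign_of_mem h

lemma gradeInvolution_gradeInvolution (x : W) :
    gradeInvolution 𝒜 (gradeInvolution 𝒜 x) = x := by
  induction x using DirectSum.Decomposition.inductionOn 𝒜 with
  | zero => simp
  | add x y hx hy => rw [map_add, map_add, hx, hy]
  | @homogeneous n a =>
    rw [gradeInvolution_of_mem a.2, map_smul, gradeInvolution_of_mem a.2, smul_smul, ← pow_add,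
      Even.neg_one_pow ⟨n, rfl⟩, one_smul]

lemma gradeInvolution_apply_comm {L : Module.End K W} (hL : ∀ n, ∀ a ∈ 𝒜 n, L a ∈ 𝒜 n)
    (w : W) : gradeInvolution 𝒜 (L w) = L (gradeInvolution 𝒜 w) := by
  induction w using DirectSum.Decomposition.inductionOn 𝒜 with
  | zero => simp
  | add x y hx hy => rw [map_add, map_add, hx, hy, map_add, map_add]
  | @homogeneous m a =>
    rw [gradeInvolution_of_mem (hL m a a.2), gradeInvolution_of_mem a.2, map_smul]

lemma map_mul_eq_of_homogeneous {f : Module.End K W}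
    (hf : ∀ n x y, x ∈ 𝒜 n → f (x * y) = f x * y + (-1 : K) ^ n • (x * f y)) (x y : W) :
    f (x * y) = f x * y + gradeInvolution 𝒜 x * f y := by
  induction x using DirectSum.Decomposition.inductionOn 𝒜 with
  | zero => simp
  | add x₁ x₂ h₁ h₂ => simp only [add_mul, map_add, h₁, h₂]; abel
  | @homogeneous n a => rw [hf n a y a.2, gradeInvolution_of_mem a.2, smul_mul_assoc]

end GradeInvolution

section Antiderivation

variable {K W : Type} [Field K] [Ring W] [Algebra K W] (𝒜 : ℕ → Submodule K W)
  [GradedAlgebra 𝒜]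

structure IsAntiderivation (f : Module.End K W) : Prop where
  map_mul : ∀ x y, f (x * y) = f x * y + gradeInvolution 𝒜 x * f y
  gradeInvolution_apply : ∀ x, gradeInvolution 𝒜 (f x) = -f (gradeInvolution 𝒜 x)

structure IsContraction (j : Module.End K W) : Prop where
  map_mul : ∀ x y, j (x * y) = j x * y + gradeInvolution 𝒜 x * j y
  mem_of_mem_succ : ∀ n, ∀ x ∈ 𝒜 (n + 1), j x ∈ 𝒜 n
  eq_zero_of_mem_zero : ∀ x ∈ 𝒜 0, j x = 0

variable {𝒜}

lemma IsGDA.isAntiderivation {d : W →ₗ[K] W} (hd : IsGDA K W 𝒜 d) :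
    IsAntiderivation 𝒜 d where
  map_mul := map_mul_eq_of_homogeneous hd.leibniz
  gradeInvolution_apply x := by
    induction x using DirectSum.Decomposition.inductionOn 𝒜 with
    | zero => simp
    | add x y hx hy => rw [map_add, map_add, hx, hy, map_add, map_add, neg_add]
    | @homogeneous n a =>
      rw [gradeInvolution_of_mem (hd.d_mem n a a.2), gradeInvolution_of_mem a.2, map_smul,
        pow_succ, mul_neg_one, neg_smul]

lemma IsLieOperation.isContraction {g : Type} [LieRing g] [LieAlgebra K g] {d : W →ₗ[K] W}
    {i : g →ₗ[K] Module.End K W} (hi : IsLieOperation K g W 𝒜 d i) (X : g) :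
    IsContraction 𝒜 (i X) where
  map_mul := map_mul_eq_of_homogeneous (hi.antider X)
  mem_of_mem_succ := hi.i_mem X
  eq_zero_of_mem_zero := hi.i_deg0 X

namespace IsContraction

variable {j : Module.End K W}

lemma map_mul_of_mem (hj : IsContraction 𝒜 j) {n : ℕ} {x : W} (hx : x ∈ 𝒜 n) (y : W) :
    j (x * y) = j x * y + (-1 : K) ^ n • (x * j y) := by
  rw [hj.map_mul, gradeInvolution_of_mem hx, smul_mul_assoc]

lemma map_one (hj : IsContraction 𝒜 j) : j 1 = 0 :=
  hj.eq_zero_of_mem_zero 1 SetLike.GradedOne.one_mem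

lemma isAntiderivation (hj : IsContraction 𝒜 j) : IsAntiderivation 𝒜 j where
  map_mul := hj.map_mul
  gradeInvolution_apply x := by
    induction x using DirectSum.Decomposition.inductionOn 𝒜 with
    | zero => simp
    | add x y hx hy => rw [map_add, map_add, hx, hy, map_add, map_add, neg_add]
    | @homogeneous n a =>
      obtain ⟨a, ha⟩ := a
      rw [gradeInvolution_of_mem ha, map_smul]
      cases n with
      | zero => simp [hj.eq_zero_of_mem_zero a ha]
      | succ n =>
        rw [gradeInvolution_of_mem (hj.mem_of_mem_succ n a ha), pow_succ, mul_neg_one, neg_smul,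
          neg_neg]

lemma add {j' : Module.End K W} (hj : IsContraction 𝒜 j) (hj' : IsContraction 𝒜 j') :
    IsContraction 𝒜 (j + j') where
  map_mul x y := by
    simp only [LinearMap.add_apply, hj.map_mul, hj'.map_mul, add_mul, mul_add]
    abel
  mem_of_mem_succ n x hx := add_mem (hj.mem_of_mem_succ n x hx) (hj'.mem_of_mem_succ n x hx)
  eq_zero_of_mem_zero x hx := by
    rw [LinearMap.add_apply, hj.eq_zero_of_mem_zero x hx, hj'.eq_zero_of_mem_zero x hx, add_zero]

lemma smul (hj : IsContraction 𝒜 j) (c : K) : IsContraction 𝒜 (c • j) where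
  map_mul x y := by
    simp only [LinearMap.smul_apply, hj.map_mul, smul_add, smul_mul_assoc, mul_smul_comm]
  mem_of_mem_succ n x hx := Submodule.smul_mem _ c (hj.mem_of_mem_succ n x hx)
  eq_zero_of_mem_zero x hx := by
    rw [LinearMap.smul_apply, hj.eq_zero_of_mem_zero x hx, smul_zero]

lemma commutator (hj : IsContraction 𝒜 j) {D : Module.End K W}
    (hD : ∀ x y, D (x * y) = D x * y + x * D y)
    (hDmem : ∀ n, ∀ x ∈ 𝒜 n, D x ∈ 𝒜 n) :
    IsContraction 𝒜 (j * D - D * j) where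
  map_mul x y := by
    simp only [LinearMap.sub_apply, Module.End.mul_apply, hD, hj.map_mul, map_add,
      gradeInvolution_apply_comm hDmem, sub_mul, mul_sub]
    abel
  mem_of_mem_succ n x hx := sub_mem (hj.mem_of_mem_succ n _ (hDmem _ x hx))
    (hDmem n _ (hj.mem_of_mem_succ n x hx))
  eq_zero_of_mem_zero x hx := by
    simp [hj.eq_zero_of_mem_zero x hx, hj.eq_zero_of_mem_zero _ (hDmem 0 x hx)]

end IsContraction

end Antiderivation

section LieDerivative

variable {K W : Type} [Field K] [Ring W] [Algebra K W]

def lieDerivative (d j : Module.End K W) : Module.End K W := d * j + j * d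

variable {d j : Module.End K W}

lemma lieDerivative_apply (x : W) : lieDerivative d j x = d (j x) + j (d x) := rfl

lemma lieDerivative_add (j' : Module.End K W) :
    lieDerivative d (j + j') = lieDerivative d j + lieDerivative d j' := by
  simp only [lieDerivative, mul_add, add_mul]
  abel

lemma lieDerivative_smul (c : K) : lieDerivative d (c • j) = c • lieDerivative d j := by
  simp only [lieDerivative, mul_smul_comm, smul_mul_assoc, smul_add]

lemma commute_lieDerivative (hd : d * d = 0) (j : Module.End K W) :
    Commute d (lieDerivative d j) := by
  simp only [Commute, SemiconjBy, lieDerivative, mul_add, add_mul, ← mul_assoc, hd]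
  simp only [mul_assoc, hd, zero_mul, mul_zero, zero_add, add_zero]

lemma lieDerivative_commutator {D : Module.End K W} (hD : Commute d D) :
    lieDerivative d (j * D - D * j) = lieDerivative d j * D - D * lieDerivative d j := by
  have hjDd : j * D * d = j * d * D := by rw [mul_assoc, ← hD.eq, ← mul_assoc]
  simp only [lieDerivative, mul_sub, sub_mul, add_mul, mul_add, ← mul_assoc, hD.eq, hjDd]
  abel

variable {𝒜 : ℕ → Submodule K W} [GradedAlgebra 𝒜]

lemma IsAntiderivation.lieDerivative_mul (hd : IsAntiderivation 𝒜 d)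
    (hj : IsAntiderivation 𝒜 j) (x y : W) :
    lieDerivative d j (x * y) = lieDerivative d j x * y + x * lieDerivative d j y := by
  simp only [lieDerivative_apply, hd.map_mul, hj.map_mul, map_add, hd.gradeInvolution_apply,
    hj.gradeInvolution_apply, gradeInvolution_gradeInvolution, add_mul, mul_add, neg_mul]
  abel

lemma IsContraction.lieDerivative_mem (hd : ∀ n, ∀ x ∈ 𝒜 n, d x ∈ 𝒜 (n + 1))
    (hj : IsContraction 𝒜 j) {n : ℕ} {x : W} (hx : x ∈ 𝒜 n) :
    lieDerivative d j x ∈ 𝒜 n := by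
  rw [lieDerivative_apply]
  cases n with
  | zero => simpa [hj.eq_zero_of_mem_zero x hx] using hj.mem_of_mem_succ 0 _ (hd 0 x hx)
  | succ n =>
    exact add_mem (hd n _ (hj.mem_of_mem_succ n x hx)) (hj.mem_of_mem_succ _ _ (hd _ x hx))

end LieDerivative

section TripleAlgebra

variable {K W : Type} [Field K] [Ring W] [Algebra K W]

/-- `W ⊕ W[-1] ⊕ W`; it depends on the grading because the product uses its grade involution. -/
def TripleAlg (_ : ℕ → Submodule K W) : Type := W × W × W

namespace TripleAlg

variable {𝒜 : ℕ → Submodule K W}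

instance : AddCommGroup (TripleAlg 𝒜) := inferInstanceAs (AddCommGroup (W × W × W))
instance : Module K (TripleAlg 𝒜) := inferInstanceAs (Module K (W × W × W))

def mk (a b c : W) : TripleAlg 𝒜 := (a, b, c)

def fst : TripleAlg 𝒜 →ₗ[K] W := LinearMap.fst K W (W × W)
def snd : TripleAlg 𝒜 →ₗ[K] W := LinearMap.fst K W W ∘ₗ LinearMap.snd K W (W × W)
def thd : TripleAlg 𝒜 →ₗ[K] W := LinearMap.snd K W W ∘ₗ LinearMap.snd K W (W × W)

@[simp] lemma fst_mk (a b c : W) : fst (mk a b c : TripleAlg 𝒜) = a := rfl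
@[simp] lemma snd_mk (a b c : W) : snd (mk a b c : TripleAlg 𝒜) = b := rfl
@[simp] lemma thd_mk (a b c : W) : thd (mk a b c : TripleAlg 𝒜) = c := rfl

def inFst : W →ₗ[K] TripleAlg 𝒜 := LinearMap.inl K W (W × W)
def inSnd : W →ₗ[K] TripleAlg 𝒜 := LinearMap.inr K W (W × W) ∘ₗ LinearMap.inl K W W
def inThd : W →ₗ[K] TripleAlg 𝒜 := LinearMap.inr K W (W × W) ∘ₗ LinearMap.inr K W W

@[simp] lemma inFst_apply (a : W) : (inFst a : TripleAlg 𝒜) = mk a 0 0 := rfl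
@[simp] lemma inSnd_apply (a : W) : (inSnd a : TripleAlg 𝒜) = mk 0 a 0 := rfl
@[simp] lemma inThd_apply (a : W) : (inThd a : TripleAlg 𝒜) = mk 0 0 a := rfl

@[ext] lemma ext {p q : TripleAlg 𝒜} (h₁ : fst p = fst q) (h₂ : snd p = snd q)
    (h₃ : thd p = thd q) : p = q :=
  Prod.ext h₁ (Prod.ext h₂ h₃)

lemma inFst_add_inSnd_add_inThd (p : TripleAlg 𝒜) :
    inFst (fst p) + inSnd (snd p) + inThd (thd p) = p := by
  ext <;> simp

variable (𝒜) in
def shifted : ℕ → Submodule K W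
  | 0 => ⊥
  | n + 1 => 𝒜 n

variable (𝒜) in
def grading (n : ℕ) : Submodule K (TripleAlg 𝒜) :=
  (𝒜 n).comap fst ⊓ (shifted 𝒜 n).comap snd ⊓ (𝒜 n).comap thd

lemma mem_grading {n : ℕ} {p : TripleAlg 𝒜} :
    p ∈ grading 𝒜 n ↔
      fst p ∈ 𝒜 n ∧ snd p ∈ shifted 𝒜 n ∧ thd p ∈ 𝒜 n := by
  simp [grading, and_assoc]

lemma inFst_mem {n : ℕ} {a : W} (ha : a ∈ 𝒜 n) : inFst a ∈ grading 𝒜 n :=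
  mem_grading.2 ⟨ha, zero_mem _, zero_mem _⟩

lemma inSnd_mem {n : ℕ} {a : W} (ha : a ∈ shifted 𝒜 n) : inSnd a ∈ grading 𝒜 n :=
  mem_grading.2 ⟨zero_mem _, ha, zero_mem _⟩

lemma inSnd_mem_succ {n : ℕ} {a : W} (ha : a ∈ 𝒜 n) : inSnd a ∈ grading 𝒜 (n + 1) :=
  inSnd_mem ha

lemma inThd_mem {n : ℕ} {a : W} (ha : a ∈ 𝒜 n) : inThd a ∈ grading 𝒜 n :=
  mem_grading.2 ⟨zero_mem _, zero_mem _, ha⟩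

instance : One (TripleAlg 𝒜) := ⟨mk 1 0 0⟩

@[simp] lemma fst_one : fst (1 : TripleAlg 𝒜) = 1 := rfl
@[simp] lemma snd_one : snd (1 : TripleAlg 𝒜) = 0 := rfl
@[simp] lemma thd_one : thd (1 : TripleAlg 𝒜) = 0 := rfl

variable [GradedAlgebra 𝒜]

noncomputable instance : Mul (TripleAlg 𝒜) :=
  ⟨fun p q => mk (fst p * fst q) (snd p * fst q + gradeInvolution 𝒜 (fst p) * snd q)
    (thd p * fst q + fst p * thd q)⟩

@[simp] lemma fst_mul (p q : TripleAlg 𝒜) : fst (p * q) = fst p * fst q := rfl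
@[simp] lemma snd_mul (p q : TripleAlg 𝒜) :
    snd (p * q) = snd p * fst q + gradeInvolution 𝒜 (fst p) * snd q := rfl
@[simp] lemma thd_mul (p q : TripleAlg 𝒜) : thd (p * q) = thd p * fst q + fst p * thd q := rfl

noncomputable instance : Ring (TripleAlg 𝒜) where
  mul_assoc p q r := by
    ext <;> simp only [fst_mul, snd_mul, thd_mul, map_mul, add_mul, mul_add, mul_assoc] <;> abel
  one_mul p := by ext <;> simp
  mul_one p := by ext <;> simp
  left_distrib p q r := by
    ext <;> simp only [fst_mul, snd_mul, thd_mul, map_add, mul_add] <;> abel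
  right_distrib p q r := by
    ext <;> simp only [fst_mul, snd_mul, thd_mul, map_add, add_mul] <;> abel
  zero_mul p := by ext <;> simp
  mul_zero p := by ext <;> simp

noncomputable instance : Algebra K (TripleAlg 𝒜) :=
  Algebra.ofModule (fun k p q => by ext <;> simp [smul_add])
    (fun k p q => by ext <;> simp [smul_add])

lemma shifted_mul_mem {m n : ℕ} {b a : W} (hb : b ∈ shifted 𝒜 m) (ha : a ∈ 𝒜 n) :
    b * a ∈ shifted 𝒜 (m + n) := by
  cases m with
  | zero => simp_all [shifted]
  | succ m =>
    rw [Nat.add_right_comm]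
    exact (SetLike.mul_mem_graded (show b ∈ 𝒜 m from hb) ha : b * a ∈ 𝒜 (m + n))

lemma mul_shifted_mem {m n : ℕ} {a b : W} (ha : a ∈ 𝒜 m) (hb : b ∈ shifted 𝒜 n) :
    a * b ∈ shifted 𝒜 (m + n) := by
  cases n with
  | zero => simp_all [shifted]
  | succ n => exact (SetLike.mul_mem_graded ha (show b ∈ 𝒜 n from hb) : a * b ∈ 𝒜 (m + n))

lemma gradeInvolution_of_mem_shifted {n : ℕ} {b : W} (hb : b ∈ shifted 𝒜 n) :
    gradeInvolution 𝒜 b = -((-1 : K) ^ n • b) := by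
  cases n with
  | zero => simp [(Submodule.mem_bot K).1 hb]
  | succ n =>
    rw [gradeInvolution_of_mem (show b ∈ 𝒜 n from hb), pow_succ, mul_neg_one, neg_smul,
      neg_neg]

instance : SetLike.GradedMonoid (grading 𝒜) where
  one_mem := mem_grading.2 ⟨SetLike.GradedOne.one_mem, zero_mem _, zero_mem _⟩
  mul_mem {m n p q} hp hq := by
    obtain ⟨hp₁, hp₂, hp₃⟩ := mem_grading.1 hp
    obtain ⟨hq₁, hq₂, hq₃⟩ := mem_grading.1 hq
    refine mem_grading.2 ⟨SetLike.mul_mem_graded hp₁ hq₁,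
      add_mem (shifted_mul_mem hp₂ hq₁) ?_,
      add_mem (SetLike.mul_mem_graded hp₃ hq₁) (SetLike.mul_mem_graded hp₁ hq₃)⟩
    rw [gradeInvolution_of_mem hp₁, smul_mul_assoc]
    exact Submodule.smul_mem _ _ (mul_shifted_mem hp₁ hq₂)

noncomputable def decomposeₗ : TripleAlg 𝒜 →ₗ[K] ⨁ n, grading 𝒜 n :=
  let dec := (decomposeLinearEquiv 𝒜).toLinearMap
  regrade (fun n => n) inFst (fun _ _ => inFst_mem) ∘ₗ dec ∘ₗ fst
    + regrade (· + 1) inSnd (fun _ _ => inSnd_mem_succ) ∘ₗ dec ∘ₗ snd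
    + regrade (fun n => n) inThd (fun _ _ => inThd_mem) ∘ₗ dec ∘ₗ thd

lemma coeLinearMap_decomposeₗ (p : TripleAlg 𝒜) :
    coeLinearMap (grading 𝒜) (decomposeₗ p) = p := by
  have h (x : W) : coeLinearMap 𝒜 (decompose 𝒜 x) = x := (decompose 𝒜).symm_apply_apply x
  simp only [decomposeₗ, LinearMap.add_apply, LinearMap.comp_apply, map_add,
    coeLinearMap_regrade, LinearEquiv.coe_coe, decomposeLinearEquiv_apply, h]
  exact inFst_add_inSnd_add_inThd p

lemma decomposeₗ_of_mem {n : ℕ} {p : TripleAlg 𝒜} (hp : p ∈ grading 𝒜 n) :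
    decomposeₗ p = of _ n ⟨p, hp⟩ := by
  obtain ⟨hp₁, hp₂, hp₃⟩ := mem_grading.1 hp
  have hsnd : regrade (· + 1) inSnd (fun _ _ => inSnd_mem_succ) (decompose 𝒜 (snd p))
      = of (fun i => grading 𝒜 i) n ⟨inSnd (snd p), inSnd_mem hp₂⟩ := by
    cases n with
    | zero =>
      simp only [(Submodule.mem_bot K).1 hp₂, map_zero, decompose_zero]
      exact (map_zero (of _ 0)).symm
    | succ n => rw [decompose_of_mem 𝒜 (show snd p ∈ 𝒜 n from hp₂), regrade_of]
  simp only [decomposeₗ, LinearMap.add_apply, LinearMap.comp_apply, LinearEquiv.coe_coe,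
    decomposeLinearEquiv_apply, decompose_of_mem 𝒜 hp₁, decompose_of_mem 𝒜 hp₃,
    regrade_of, hsnd]
  rw [← map_add, ← map_add]
  congr 1
  ext : 1
  exact inFst_add_inSnd_add_inThd p

noncomputable instance : GradedAlgebra (grading 𝒜) where
  __ := Decomposition.ofLinearMap _ decomposeₗ
    (LinearMap.ext coeLinearMap_decomposeₗ)
    (linearMap_ext _ fun n => LinearMap.ext fun p => by simp [decomposeₗ_of_mem p.2, lof_eq_of])

variable (d : W →ₗ[K] W)

def differential : TripleAlg 𝒜 →ₗ[K] TripleAlg 𝒜 :=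
  inFst ∘ₗ d ∘ₗ fst + inSnd ∘ₗ (thd - d ∘ₗ snd) + inThd ∘ₗ d ∘ₗ thd

@[simp] lemma fst_differential (p : TripleAlg 𝒜) : fst (differential d p) = d (fst p) := by
  simp [differential]

@[simp] lemma snd_differential (p : TripleAlg 𝒜) :
    snd (differential d p) = thd p - d (snd p) := by
  simp [differential]

@[simp] lemma thd_differential (p : TripleAlg 𝒜) : thd (differential d p) = d (thd p) := by
  simp [differential]

variable {d}

lemma isGDA_differential (hd : IsGDA K W 𝒜 d) :
    IsGDA K (TripleAlg 𝒜) (grading 𝒜) (differential d) where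
  d_mem n p hp := by
    obtain ⟨hp₁, hp₂, hp₃⟩ := mem_grading.1 hp
    rw [mem_grading, fst_differential, snd_differential, thd_differential]
    refine ⟨hd.d_mem n _ hp₁, sub_mem hp₃ ?_, hd.d_mem n _ hp₃⟩
    cases n with
    | zero => simp [(Submodule.mem_bot K).1 hp₂]
    | succ n => exact hd.d_mem n _ hp₂
  d_sq p := by ext <;> simp [hd.d_sq]
  leibniz n p q hp := by
    obtain ⟨hp₁, hp₂, hp₃⟩ := mem_grading.1 hp
    have hsq : (-1 : K) ^ n * (-1) ^ n = 1 := by rw [← pow_add, Even.neg_one_pow ⟨n, rfl⟩]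
    have hε : gradeInvolution 𝒜 (fst p) = (-1 : K) ^ n • fst p := gradeInvolution_of_mem hp₁
    ext
    · simp only [fst_mul, fst_differential, map_add, map_smul]
      exact hd.leibniz n _ _ hp₁
    · simp only [snd_mul, thd_mul, fst_differential, snd_differential, map_add, map_smul,
        hd.isAntiderivation.map_mul, hd.isAntiderivation.gradeInvolution_apply, hε,
        gradeInvolution_of_mem_shifted hp₂, sub_mul, mul_sub, neg_mul, smul_add, smul_sub,
        smul_mul_assoc, smul_smul, hsq, one_smul]
      abel
    · simp only [thd_mul, fst_differential, thd_differential, map_add, map_smul,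
        hd.leibniz n _ _ hp₁, hd.leibniz n _ _ hp₃, smul_add]
      abel

variable (𝒜) in
noncomputable def fstHom : TripleAlg 𝒜 →ₐ[K] W := AlgHom.ofLinearMap fst rfl fun _ _ => rfl

@[simp] lemma fstHom_apply (p : TripleAlg 𝒜) : fstHom 𝒜 p = fst p := rfl

variable {j : Module.End K W}

noncomputable def ofContraction (hd : IsGDA K W 𝒜 d) (hj : IsContraction 𝒜 j) :
    W →ₐ[K] TripleAlg 𝒜 :=
  AlgHom.ofLinearMap (inFst + inSnd ∘ₗ j + inThd ∘ₗ lieDerivative d j)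
    (by
      have hL : lieDerivative d j 1 = 0 := apply_one_eq_zero_of_leibniz
        (hd.isAntiderivation.lieDerivative_mul hj.isAntiderivation)
      ext <;> simp [hj.map_one, hL])
    (fun x y => by
      ext <;> simp [hj.map_mul, hd.isAntiderivation.lieDerivative_mul hj.isAntiderivation])

variable (hd : IsGDA K W 𝒜 d) (hj : IsContraction 𝒜 j)

@[simp] lemma fst_ofContraction (x : W) : fst (ofContraction hd hj x) = x := by
  simp [ofContraction]

@[simp] lemma snd_ofContraction (x : W) : snd (ofContraction hd hj x) = j x := by
  simp [ofContraction]

@[simp] lemma thd_ofContraction (x : W) :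
    thd (ofContraction hd hj x) = lieDerivative d j x := by
  simp [ofContraction]

lemma ofContraction_mem {n : ℕ} {x : W} (hx : x ∈ 𝒜 n) :
    ofContraction hd hj x ∈ grading 𝒜 n := by
  refine mem_grading.2 ⟨by simpa, ?_, by simpa using hj.lieDerivative_mem hd.d_mem hx⟩
  rw [snd_ofContraction]
  cases n with
  | zero => simp [shifted, hj.eq_zero_of_mem_zero x hx]
  | succ n => exact hj.mem_of_mem_succ n x hx

lemma ofContraction_apply_differential (x : W) :
    ofContraction hd hj (d x) = differential d (ofContraction hd hj x) := by
  ext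
  · simp
  · simp [lieDerivative_apply]
  · simpa using LinearMap.congr_fun (commute_lieDerivative (LinearMap.ext hd.d_sq) j).eq.symm x

end TripleAlg

end TripleAlgebra

namespace GDEnvelope

open TripleAlg

variable {K A : Type} [Field K] [Ring A] [Algebra K A] (E : GDEnvelope K A (trivGrading K A))

lemma ι_mem_grading_zero (a : A) : E.ι a ∈ E.grading 0 :=
  E.ι_grading 0 a (by simp [trivGrading])

lemma eq_of_isContraction {j j' : Module.End K E.W} (hj : IsContraction E.grading j)
    (hj' : IsContraction E.grading j')
    (h : ∀ a, lieDerivative E.d j (E.ι a) = lieDerivative E.d j' (E.ι a)) : j = j' := by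
  let Φ := ofContraction E.isGDA hj
  let Φ' := ofContraction E.isGDA hj'
  have hΦ : Φ = Φ' :=
    (E.univ _ inferInstance inferInstance _ inferInstance _ (isGDA_differential E.isGDA)
      (Φ.comp E.ι) fun n a ha => ofContraction_mem E.isGDA hj (E.ι_grading n a ha)).unique
      ⟨fun n w hw => ofContraction_mem E.isGDA hj hw,
        ofContraction_apply_differential E.isGDA hj, fun a => rfl⟩
      ⟨fun n w hw => ofContraction_mem E.isGDA hj' hw,
        ofContraction_apply_differential E.isGDA hj', fun a => by
          ext
          · simp [Φ, Φ']
          · simp [Φ, Φ', hj.eq_zero_of_mem_zero _ (E.ι_mem_grading_zero a),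
              hj'.eq_zero_of_mem_zero _ (E.ι_mem_grading_zero a)]
          · simp [Φ, Φ', h a]⟩
  ext w
  simpa [Φ, Φ'] using congr_arg snd (DFunLike.congr_fun hΦ w)

variable {D : Module.End K A}

noncomputable def derivationLift (hD : ∀ a b, D (a * b) = D a * b + a * D b) :
    A →ₐ[K] TripleAlg E.grading :=
  AlgHom.ofLinearMap (inFst ∘ₗ E.ι.toLinearMap + inThd ∘ₗ E.ι.toLinearMap ∘ₗ D)
    (by ext <;> simp [apply_one_eq_zero_of_leibniz hD])
    (fun a b => by ext <;> simp [hD])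

@[simp] lemma derivationLift_apply (hD : ∀ a b, D (a * b) = D a * b + a * D b) (a : A) :
    E.derivationLift hD a = TripleAlg.mk (E.ι a) 0 (E.ι (D a)) := by
  ext <;> simp [derivationLift]

lemma derivationLift_mem (hD : ∀ a b, D (a * b) = D a * b + a * D b) {n : ℕ} {a : A}
    (ha : a ∈ trivGrading K A n) : E.derivationLift hD a ∈ TripleAlg.grading E.grading n := by
  cases n with
  | zero =>
    rw [derivationLift_apply, mem_grading]
    exact ⟨E.ι_mem_grading_zero a, zero_mem _, E.ι_mem_grading_zero (D a)⟩
  | succ n =>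
    simp only [trivGrading, Nat.succ_ne_zero, if_false, Submodule.mem_bot] at ha
    rw [ha, map_zero]
    exact zero_mem _

lemma exists_isContraction (hD : ∀ a b, D (a * b) = D a * b + a * D b) :
    ∃ j, IsContraction E.grading j ∧ ∀ a, lieDerivative E.d j (E.ι a) = E.ι (D a) := by
  obtain ⟨Φ, ⟨hΦmem, hΦd, hΦι⟩, -⟩ :=
    E.univ _ inferInstance inferInstance _ inferInstance _ (isGDA_differential E.isGDA)
      (E.derivationLift hD) fun _ _ => E.derivationLift_mem hD
  have hfst : (fstHom E.grading).comp Φ = AlgHom.id K E.W :=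
    (E.univ _ inferInstance inferInstance _ inferInstance _ E.isGDA E.ι E.ι_grading).unique
      ⟨fun n w hw => (mem_grading.1 (hΦmem n w hw)).1, fun w => by simp [hΦd],
        fun a => by simp [hΦι]⟩
      ⟨fun n w hw => hw, fun w => rfl, fun a => rfl⟩
  let j : Module.End K E.W := snd ∘ₗ Φ.toLinearMap
  have hL (w : E.W) : lieDerivative E.d j w = thd (Φ w) := by
    have := congr_arg snd (hΦd w)
    simp only [snd_differential] at this
    simp [lieDerivative_apply, j, this]
  refine ⟨j, ⟨fun x y => ?_, fun n x hx => (mem_grading.1 (hΦmem _ x hx)).2.1,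
    fun x hx => ?_⟩, fun a => by simp [hL, hΦι]⟩
  · have hfst' (w : E.W) : fst (Φ w) = w := DFunLike.congr_fun hfst w
    simp [j, hfst']
  · exact (Submodule.mem_bot K).1 (mem_grading.1 (hΦmem 0 x hx)).2.1

noncomputable def contraction (hD : ∀ a b, D (a * b) = D a * b + a * D b) : Module.End K E.W :=
  (E.exists_isContraction hD).choose

lemma isContraction_contraction (hD : ∀ a b, D (a * b) = D a * b + a * D b) :
    IsContraction E.grading (E.contraction hD) :=
  (E.exists_isContraction hD).choose_spec.1

lemma lieDerivative_contraction_ι (hD : ∀ a b, D (a * b) = D a * b + a * D b) (a : A) :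
    lieDerivative E.d (E.contraction hD) (E.ι a) = E.ι (D a) :=
  (E.exists_isContraction hD).choose_spec.2 a

variable {g : Type} [LieRing g] [LieAlgebra K g]

noncomputable def operation (L0 : g →ₗ[K] Module.End K A)
    (hL0 : ∀ X a b, L0 X (a * b) = L0 X a * b + a * L0 X b) : g →ₗ[K] Module.End K E.W where
  toFun X := E.contraction (hL0 X)
  map_add' X Y := E.eq_of_isContraction (E.isContraction_contraction _)
    ((E.isContraction_contraction _).add (E.isContraction_contraction _)) fun a => by
      simp [lieDerivative_add, lieDerivative_contraction_ι]
  map_smul' c X := E.eq_of_isContraction (E.isContraction_contraction _)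
    ((E.isContraction_contraction _).smul c) fun a => by
      simp [lieDerivative_smul, lieDerivative_contraction_ι]

variable (L0 : g →ₗ[K] Module.End K A) (hL0 : ∀ X a b, L0 X (a * b) = L0 X a * b + a * L0 X b)

lemma isContraction_operation (X : g) : IsContraction E.grading (E.operation L0 hL0 X) :=
  E.isContraction_contraction (hL0 X)

lemma lieDerivative_operation_ι (X : g) (a : A) :
    lieDerivative E.d (E.operation L0 hL0 X) (E.ι a) = E.ι (L0 X a) :=
  E.lieDerivative_contraction_ι (hL0 X) a

lemma isLieOperation_operation (hL0lie : ∀ X Y : g, L0 ⁅X, Y⁆ = ⁅L0 X, L0 Y⁆) :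
    IsLieOperation K g E.W E.grading E.d (E.operation L0 hL0) where
  i_mem X := (E.isContraction_operation L0 hL0 X).mem_of_mem_succ
  i_deg0 X := (E.isContraction_operation L0 hL0 X).eq_zero_of_mem_zero
  antider X _ _ _ hx := (E.isContraction_operation L0 hL0 X).map_mul_of_mem hx _
  cartan X Y := by
    have hY := E.isContraction_operation L0 hL0 Y
    show _ * lieDerivative E.d _ - lieDerivative E.d _ * _ = _
    refine E.eq_of_isContraction ((E.isContraction_operation L0 hL0 X).commutator
      (E.isGDA.isAntiderivation.lieDerivative_mul hY.isAntiderivation)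
      (fun n x hx => hY.lieDerivative_mem E.isGDA.d_mem hx))
      (E.isContraction_operation L0 hL0 _) fun a => ?_
    rw [lieDerivative_commutator (commute_lieDerivative (LinearMap.ext E.isGDA.d_sq) _)]
    simp [lieDerivative_operation_ι, hL0lie, Ring.lie_def]

end GDEnvelope

theorem stmt0_general (K : Type) [Field K] (g : Type) [LieRing g] [LieAlgebra K g]
    (A : Type) [Ring A] [Algebra K A]
    (E : GDEnvelope K A (trivGrading K A))
    (L0 : g →ₗ[K] Module.End K A)
    (hL0der : ∀ (X : g) (a b : A), L0 X (a * b) = L0 X a * b + a * L0 X b)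
    (hL0lie : ∀ X Y : g, L0 ⁅X, Y⁆ = ⁅L0 X, L0 Y⁆) :
    ∃! i : g →ₗ[K] Module.End K E.W,
      IsLieOperation K g E.W E.grading E.d i ∧
      ∀ (X : g) (a : A), i X (E.d (E.ι a)) + E.d (i X (E.ι a)) = E.ι (L0 X a) := by
  refine ⟨E.operation L0 hL0der,
    ⟨E.isLieOperation_operation L0 hL0der hL0lie, fun X a => ?_⟩, ?_⟩
  · rw [add_comm, ← lieDerivative_apply, E.lieDerivative_operation_ι]
  · rintro i ⟨hi, hiL⟩
    ext1 X
    refine E.eq_of_isContraction (hi.isContraction X) (E.isContraction_operation L0 hL0der X)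
      fun a => ?_
    rw [lieDerivative_apply, add_comm, hiL, E.lieDerivative_operation_ι]

/-- Let `g` be a finite-dimensional Lie algebra over `K`, `A` a unital
associative `K`-algebra and `X ↦ L0 X` a Lie algebra homomorphism from `g` into the Lie
algebra of derivations of `A`.  Then there is a unique operation of `g` in the universal
differential calculus `Ω(A)` (the differential envelope `E` of `A`) such that
`L X (ι a) = ι (L0 X a)` for all `a ∈ A`, where `L X = i X ∘ d + d ∘ i X`. -/
theorem stmt0 (K : Type) [Field K] (g : Type) [LieRing g] [LieAlgebra K g]
    [Module.Finite K g] (A : Type) [Ring A] [Algebra K A]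
    (E : GDEnvelope K A (trivGrading K A))
    (L0 : g →ₗ[K] Module.End K A)
    (hL0der : ∀ (X : g) (a b : A), L0 X (a * b) = L0 X a * b + a * L0 X b)
    (hL0lie : ∀ X Y : g, L0 ⁅X, Y⁆ = ⁅L0 X, L0 Y⁆) :
    ∃! i : g →ₗ[K] Module.End K E.W,
      IsLieOperation K g E.W E.grading E.d i ∧
      ∀ (X : g) (a : A), i X (E.d (E.ι a)) + E.d (i X (E.ι a)) = E.ι (L0 X a) :=
  stmt0_general K g A E L0 hL0der hL0lie
end

section
/- Let Ω be a graded differential algebra carrying an operation of a finite-dimensional Lie algebra g. Then for every X ∈ g and all Y_1, …, Y_n ∈ g one has the shuffle identity i_X L_{Y_1} ⋯ L_{Y_n} = Σ_{p=0}^{n} Σ_{(i,j) ∈ (p, n−p)-shuffles} L_{Y_{i_1}} ⋯ L_{Y_{i_p}} i_{[[…[X, Y_{j_1}], …], Y_{j_{n−p}}]}, where the inner sum is over all (p, n−p)-shuffles of {1, …, n} with i_1 < ⋯ < i_p and j_1 < ⋯ < j_{n−p}. -/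
open scoped TensorProduct DirectSum

/-! Cartan's relation reads `i X * L Y = L Y * i X + i ⁅X, Y⁆`: pushing `i X` past `L (Y 0)`
either leaves `L (Y 0)` in front or absorbs `Y 0` into the bracket `⁅X, Y 0⁆`. Inducting on `n`,
with the subsets of `Fin (n + 1)` split according to whether they contain `0`, gives one term for
each set `s` of indices whose `L` ends up in front, the other `Y`s being bracketed onto `X` in
increasing order. -/

open Finset

namespace Fin

theorem sum_finset_succ {M : Type*} [AddCommMonoid M] {n : ℕ} (f : Finset (Fin (n + 1)) → M) :
    ∑ s, f s
      = ∑ t : Finset (Fin n), (f (t.map (succEmb n)) + f (insert 0 (t.map (succEmb n)))) := by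
  rw [sum_add_distrib, ← sum_filter_not_add_sum_filter univ (fun s => 0 ∈ s)]
  congr 1
  · symm
    refine sum_nbij' (fun t => t.map (succEmb n)) (fun s => univ.filter fun k => k.succ ∈ s)
      ?_ ?_ ?_ ?_ fun _ _ => rfl
    · simp
    · simp
    · intro t _; ext k; simp
    · intro s hs
      simp only [mem_filter, mem_univ, true_and] at hs
      ext k; cases k using Fin.cases <;> simp [hs]
  · symm
    refine sum_nbij' (fun t => insert 0 (t.map (succEmb n)))
      (fun s => univ.filter fun k => k.succ ∈ s) ?_ ?_ ?_ ?_ fun _ _ => rfl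
    · simp
    · simp
    · intro t _; ext k; simp [succ_ne_zero]
    · intro s hs
      simp only [mem_filter, mem_univ, true_and] at hs
      ext k; cases k using Fin.cases <;> simp [hs]

theorem sort_map_succEmb {n : ℕ} (t : Finset (Fin n)) :
    (t.map (succEmb n)).sort = t.sort.map succ :=
  ((strictMono_succ.strictMonoOn _).map_finsetSort).symm

theorem sort_insert_zero_map_succEmb {n : ℕ} (t : Finset (Fin n)) :
    (insert 0 (t.map (succEmb n))).sort = 0 :: t.sort.map succ := by
  rw [sort_insert _ (fun b _ => zero_le b) (by simp [succ_ne_zero]), sort_map_succEmb]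

theorem compl_map_succEmb {n : ℕ} (t : Finset (Fin n)) :
    (t.map (succEmb n))ᶜ = insert 0 (tᶜ.map (succEmb n)) := by
  ext k; cases k using Fin.cases <;> simp [succ_ne_zero]

theorem compl_insert_zero_map_succEmb {n : ℕ} (t : Finset (Fin n)) :
    (insert 0 (t.map (succEmb n)))ᶜ = tᶜ.map (succEmb n) := by
  ext k; cases k using Fin.cases <;> simp [succ_ne_zero]

end Fin

theorem mul_eq_mul_add_of_lie_eq {R : Type*} [Ring R] {a b c : R} (h : ⁅a, b⁆ = c) :
    a * b = b * a + c := by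
  rw [← h, Ring.lie_def]; abel

theorem mul_prod_ofFn_eq_sum_shuffles {R g : Type*} [Ring R] [LieRing g] (i L : g → R)
    (h : ∀ Z W, ⁅i Z, L W⁆ = i ⁅Z, W⁆) (n : ℕ) (X : g) (Y : Fin n → g) :
    i X * (List.ofFn fun k => L (Y k)).prod
      = ∑ s : Finset (Fin n),
          ((s.sort (· ≤ ·)).map fun k => L (Y k)).prod
            * i ((((sᶜ).sort (· ≤ ·)).map Y).foldl (fun Z W => ⁅Z, W⁆) X) := by
  induction n generalizing X with
  | zero => simp [eq_empty_of_isEmpty]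
  | succ n ih =>
    have hY := fun Z => ih Z (fun k => Y k.succ)
    rw [Fin.sum_finset_succ, List.ofFn_succ, List.prod_cons, ← mul_assoc,
      mul_eq_mul_add_of_lie_eq (h X (Y 0)), add_mul, mul_assoc, hY, hY, mul_sum,
      ← sum_add_distrib]
    refine sum_congr rfl fun t _ => ?_
    simp only [Fin.sort_map_succEmb, Fin.sort_insert_zero_map_succEmb, Fin.compl_map_succEmb,
      Fin.compl_insert_zero_map_succEmb, List.map_cons, List.map_map, List.prod_cons,
      List.foldl_cons, Function.comp_def, mul_assoc]
    exact add_comm _ _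

theorem stmt4_general (K : Type) [Field K] (g : Type) [LieRing g] [LieAlgebra K g]
    (Ω : Type) [Ring Ω] [Algebra K Ω] (𝒜 : ℕ → Submodule K Ω)
    (d : Ω →ₗ[K] Ω)
    (i : g →ₗ[K] Module.End K Ω) (hi : IsLieOperation K g Ω 𝒜 d i)
    (n : ℕ) (X : g) (Y : Fin n → g) :
    (letI L : g → Module.End K Ω :=
      fun Z => (d : Module.End K Ω) * i Z + i Z * (d : Module.End K Ω)
    i X * (List.ofFn fun k => L (Y k)).prod
      = ∑ s : Finset (Fin n),
          ((s.sort (· ≤ ·)).map fun k => L (Y k)).prod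
            * i ((((sᶜ).sort (· ≤ ·)).map Y).foldl (fun Z W => ⁅Z, W⁆) X)) :=
  mul_prod_ofFn_eq_sum_shuffles (fun Z => i Z) _
    (fun Z W => (Ring.lie_def _ _).trans (hi.cartan Z W)) n X Y

/-- Let `Ω` be a graded differential algebra carrying an operation of a
finite-dimensional Lie algebra `g`.  Then for every `X ∈ g` and `Y₁, …, Yₙ ∈ g` one has
the shuffle identity
`i_X L_{Y₁} ⋯ L_{Yₙ} = Σₚ Σ_{(p,n-p)-shuffles} L_{Y_{i₁}} ⋯ L_{Y_{iₚ}} i_{[[…[X,Y_{j₁}],…],Y_{j_{n-p}}]}`.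
A `(p, n-p)`-shuffle `(i₁ < ⋯ < iₚ ; j₁ < ⋯ < j_{n-p})` of `{1, …, n}` is encoded as a
subset `s` of `Fin n` (of cardinality `p`, with increasing enumeration `i₁ < ⋯ < iₚ`)
together with its complement (with increasing enumeration `j₁ < ⋯ < j_{n-p}`); the sum
over `p` of the sums over `(p, n-p)`-shuffles is the sum over all such subsets `s`. -/
theorem stmt4 (K : Type) [Field K] (g : Type) [LieRing g] [LieAlgebra K g]
    [Module.Finite K g]
    (Ω : Type) [Ring Ω] [Algebra K Ω] (𝒜 : ℕ → Submodule K Ω) [GradedAlgebra 𝒜]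
    (d : Ω →ₗ[K] Ω) (hΩ : IsGDA K Ω 𝒜 d)
    (i : g →ₗ[K] Module.End K Ω) (hi : IsLieOperation K g Ω 𝒜 d i)
    (n : ℕ) (X : g) (Y : Fin n → g) :
    (letI L : g → Module.End K Ω :=
      fun Z => (d : Module.End K Ω) * i Z + i Z * (d : Module.End K Ω)
    i X * (List.ofFn fun k => L (Y k)).prod
      = ∑ s : Finset (Fin n),
          ((s.sort (· ≤ ·)).map fun k => L (Y k)).prod
            * i ((((sᶜ).sort (· ≤ ·)).map Y).foldl (fun Z W => ⁅Z, W⁆) X)) :=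
  stmt4_general K g Ω 𝒜 d i hi n X Y
end
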